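/- arXiv:2412.16347 — 2 statements merged into one kernel-verified Lean document; each statement's English description precedes it below -/
import Mathlib

section
/- Consider an LTV system on an open interval I ⊆ ℝ with coefficients A, B, C, D, let Q : I → ℂ^{n×n} be pointwise Hermitian positive semidefinite such that V_Q is a storage function for this system, and assume there exists a fundamental solution matrix X for A anchored at some t0 ∈ I. Then Q is locally absolutely upper semicontinuous on I, i.e., for every compact subinterval [a,b] ⊆ I there exists a Bochner-integrable G : [a,b] → ℂ^{n×n}, pointwise Hermitian, with Q(s) − Q(r) ≤ ∫_r^s G(t) dt in the Loewner order for all a ≤ r ≤ s ≤ b. -/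
open MeasureTheory Matrix Set Filter Topology
open scoped ComplexOrder ENNReal

namespace Paper

/-- Loewner order `M ≤ N`, i.e. `N - M` is positive semidefinite. -/
def LoewnerLE {n : ℕ} (M N : Matrix (Fin n) (Fin n) ℂ) : Prop := (N - M).PosSemidef

/-- Entrywise (Bochner) interval integral of a matrix-valued function. -/
noncomputable def matInt {k l : ℕ} (G : ℝ → Matrix (Fin k) (Fin l) ℂ) (r s : ℝ) :
    Matrix (Fin k) (Fin l) ℂ :=
  Matrix.of fun i j => ∫ t in r..s, G t i j

/-- `Q` is absolutely upper semicontinuous on `[a,b]`: there is a Bochner-integrable,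
pointwise Hermitian `G` with `Q s - Q r ≤ ∫_r^s G` in the Loewner order. -/
def IsAUCOn {n : ℕ} (Q : ℝ → Matrix (Fin n) (Fin n) ℂ) (a b : ℝ) : Prop :=
  ∃ G : ℝ → Matrix (Fin n) (Fin n) ℂ,
    (∀ t, (G t).IsHermitian) ∧
    (∀ i j, IntegrableOn (fun t => G t i j) (Icc a b)) ∧
    ∀ r s : ℝ, a ≤ r → r ≤ s → s ≤ b → LoewnerLE (Q s - Q r) (matInt G r s)

/-- A matrix-valued function is locally `L^p` on `I` (entrywise, on compact subintervals). -/
def MemLocLp {k l : ℕ} (p : ℝ≥0∞) (I : Set ℝ) (F : ℝ → Matrix (Fin k) (Fin l) ℂ) : Prop :=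
  ∀ a b : ℝ, a ∈ I → b ∈ I → ∀ i j, MemLp (fun t => F t i j) p (volume.restrict (Icc a b))

/-- A vector-valued function is locally `L^p` on `I`. -/
def VecMemLocLp {k : ℕ} (p : ℝ≥0∞) (I : Set ℝ) (f : ℝ → Fin k → ℂ) : Prop :=
  ∀ a b : ℝ, a ∈ I → b ∈ I → ∀ i, MemLp (fun t => f t i) p (volume.restrict (Icc a b))

/-- `x` is locally absolutely continuous on `I` with (a.e.) derivative `x'`. -/
def VecLocAC {k : ℕ} (I : Set ℝ) (x x' : ℝ → Fin k → ℂ) : Prop :=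
  (∀ a b : ℝ, a ∈ I → b ∈ I → ∀ i, IntegrableOn (fun t => x' t i) (Icc a b)) ∧
  ∀ s t : ℝ, s ∈ I → t ∈ I → ∀ i, x t i = x s i + ∫ τ in s..t, x' τ i

/-- A matrix function is locally absolutely continuous on `I` with (a.e.) derivative `X'`. -/
def MatLocAC {k l : ℕ} (I : Set ℝ) (X X' : ℝ → Matrix (Fin k) (Fin l) ℂ) : Prop :=
  (∀ a b : ℝ, a ∈ I → b ∈ I → ∀ i j, IntegrableOn (fun t => X' t i j) (Icc a b)) ∧
  ∀ s t : ℝ, s ∈ I → t ∈ I → ∀ i j, X t i j = X s i j + ∫ τ in s..t, X' τ i j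

/-- The coefficients of an LTV system lie in the appropriate local Lebesgue spaces. -/
def IsLTV {n m : ℕ} (I : Set ℝ)
    (A : ℝ → Matrix (Fin n) (Fin n) ℂ) (B : ℝ → Matrix (Fin n) (Fin m) ℂ)
    (C : ℝ → Matrix (Fin m) (Fin n) ℂ) (D : ℝ → Matrix (Fin m) (Fin m) ℂ) : Prop :=
  MemLocLp 1 I A ∧ MemLocLp 2 I B ∧ MemLocLp 2 I C ∧ MemLocLp ⊤ I D

/-- `(x, u, y)` is a state-input-output solution of the LTV system on `I`. -/
def IsSIOSol {n m : ℕ} (I : Set ℝ)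
    (A : ℝ → Matrix (Fin n) (Fin n) ℂ) (B : ℝ → Matrix (Fin n) (Fin m) ℂ)
    (C : ℝ → Matrix (Fin m) (Fin n) ℂ) (D : ℝ → Matrix (Fin m) (Fin m) ℂ)
    (x : ℝ → Fin n → ℂ) (u y : ℝ → Fin m → ℂ) : Prop :=
  VecMemLocLp 2 I u ∧ VecMemLocLp 2 I y ∧
  (∃ x', VecLocAC I x x' ∧ ∀ᵐ t ∂volume, t ∈ I → x' t = A t *ᵥ x t + B t *ᵥ u t) ∧
  ∀ᵐ t ∂volume, t ∈ I → y t = C t *ᵥ x t + D t *ᵥ u t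

/-- The supplied energy `∫_{t0}^{t1} Re (y(t)^* u(t)) dt`. -/
noncomputable def supply {k : ℕ} (u y : ℝ → Fin k → ℂ) (t0 t1 : ℝ) : ℝ :=
  ∫ t in t0..t1, (star (y t) ⬝ᵥ u t).re

/-- `V` is a storage function for the LTV system on `I`. -/
def IsStorage {n m : ℕ} (I : Set ℝ)
    (A : ℝ → Matrix (Fin n) (Fin n) ℂ) (B : ℝ → Matrix (Fin n) (Fin m) ℂ)
    (C : ℝ → Matrix (Fin m) (Fin n) ℂ) (D : ℝ → Matrix (Fin m) (Fin m) ℂ)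
    (V : ℝ → (Fin n → ℂ) → ℝ) : Prop :=
  (∀ t ∈ I, ∀ x, 0 ≤ V t x) ∧ (∀ t ∈ I, V t 0 = 0) ∧
  ∀ x u y, IsSIOSol I A B C D x u y → ∀ t0 t1 : ℝ, t0 ∈ I → t1 ∈ I → t0 ≤ t1 →
    V t1 (x t1) - V t0 (x t0) ≤ supply u y t0 t1

/-- The quadratic storage function candidate `V_Q(t, x) = ½ x^* Q(t) x`. -/
noncomputable def quadStorage {k : ℕ} (Q : ℝ → Matrix (Fin k) (Fin k) ℂ) :
    ℝ → (Fin k → ℂ) → ℝ :=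
  fun t x => (1 / 2 : ℝ) * (star x ⬝ᵥ (Q t *ᵥ x)).re

/-- `X` is a fundamental solution matrix for `A` anchored at `t0`. -/
def IsFundamental {n : ℕ} (I : Set ℝ) (A : ℝ → Matrix (Fin n) (Fin n) ℂ) (t0 : ℝ)
    (X : ℝ → Matrix (Fin n) (Fin n) ℂ) : Prop :=
  t0 ∈ I ∧ X t0 = 1 ∧ (∀ t ∈ I, IsUnit (X t)) ∧
  ∃ X', MatLocAC I X X' ∧ ∀ᵐ t ∂volume, t ∈ I → X' t = A t * X t

/-- The supply set whose supremum is the available storage `V_a(t0, x0)`. -/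
def supplySet {n m : ℕ} (I : Set ℝ)
    (A : ℝ → Matrix (Fin n) (Fin n) ℂ) (B : ℝ → Matrix (Fin n) (Fin m) ℂ)
    (C : ℝ → Matrix (Fin m) (Fin n) ℂ) (D : ℝ → Matrix (Fin m) (Fin m) ℂ)
    (t0 : ℝ) (x0 : Fin n → ℂ) : Set ℝ :=
  { c | ∃ t1 x u y, t1 ∈ I ∧ t0 ≤ t1 ∧ IsSIOSol I A B C D x u y ∧ x t0 = x0 ∧
      c = -(supply u y t0 t1) }

/-- Null space decomposition structure: `M i j = 0` whenever `i` or `j` (0-based) is `≥ r`,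
and the top-left `r × r` block of `M` is Hermitian positive definite. -/
def NSDStruct {k : ℕ} (M : Matrix (Fin k) (Fin k) ℂ) (r : ℕ) : Prop :=
  (∀ i j : Fin k, (r ≤ (i : ℕ) ∨ r ≤ (j : ℕ)) → M i j = 0) ∧
  ∀ h : r ≤ k, (M.submatrix (Fin.castLE h) (Fin.castLE h)).PosDef

end Paper

/-!
Along a free motion `x(t) = X(t) v` (zero input, hence zero supply) the storage cannot increase,
so `M(t) = X(t)ᴴ Q(t) X(t)` is positive semidefinite and antitone in the Loewner order; with the
C⋆-norm this gives `‖M(r)‖ ≤ ‖M(a)‖` on `[a, b]`. Writing `Q(t) = X(t)⁻ᴴ M(t) X(t)⁻¹` and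
replacing `M(s)` by the larger `M(r)` bounds `Q(s) - Q(r)` by a self-adjoint matrix of norm
`O(‖X(s)⁻¹ - X(r)⁻¹‖) = O(‖X(s) - X(r)‖) = O(∫_r^s ‖Ẋ‖)`, the constants coming from a bound on
`X⁻¹` over the compact interval; so a scalar multiple of the identity serves as `G`.
-/

open scoped MatrixOrder Matrix.Norms.L2Operator

section General

theorem intervalIntegrable_of_integrableOn_Icc {E : Type*} [NormedAddCommGroup E] {I : Set ℝ}
    {f : ℝ → E} (hf : ∀ a b, a ∈ I → b ∈ I → IntegrableOn f (Icc a b)) {a b : ℝ} (ha : a ∈ I)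
    (hb : b ∈ I) : IntervalIntegrable f volume a b :=
  ⟨(hf a b ha hb).mono_set Ioc_subset_Icc_self, (hf b a hb ha).mono_set Ioc_subset_Icc_self⟩

theorem ContinuousOn.memLp_top_Icc {E : Type*} [NormedAddCommGroup E] {f : ℝ → E} {a b : ℝ}
    (hf : ContinuousOn f (Icc a b)) : MemLp f ⊤ (volume.restrict (Icc a b)) := by
  obtain ⟨K, hK⟩ := isCompact_Icc.exists_bound_of_continuousOn hf
  exact memLp_top_of_bound (hf.aestronglyMeasurable measurableSet_Icc) K
    ((ae_restrict_iff' measurableSet_Icc).mpr (ae_of_all _ hK))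

theorem ContinuousOn.matrix_inv {α R n : Type*} [TopologicalSpace α] [Fintype n] [DecidableEq n]
    [Field R] [TopologicalSpace R] [IsTopologicalDivisionRing R]
    {X : α → Matrix n n R} {s : Set α} (hX : ContinuousOn X s) (hunit : ∀ t ∈ s, IsUnit (X t)) :
    ContinuousOn (fun t => (X t)⁻¹) s := fun t ht => by
  have hdet : ContinuousAt Ring.inverse (X t).det := by
    rw [Ring.inverse_eq_inv']
    exact continuousAt_inv₀ ((isUnit_iff_isUnit_det _).mp (hunit t ht)).ne_zero
  exact (continuousAt_matrix_inv _ hdet).comp_continuousWithinAt (hX t ht)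

theorem Matrix.l2_opNorm_le_sum_norm_apply {m n 𝕜 : Type*} [Fintype m] [Fintype n]
    [DecidableEq m] [DecidableEq n] [RCLike 𝕜] (A : Matrix m n 𝕜) :
    ‖A‖ ≤ ∑ i, ∑ j, ‖A i j‖ * ‖single i j (1 : 𝕜)‖ := by
  conv_lhs => rw [matrix_eq_sum_single A]
  refine (norm_sum_le _ _).trans (Finset.sum_le_sum fun i _ => (norm_sum_le _ _).trans ?_)
  refine Finset.sum_le_sum fun j _ => ?_
  rw [← norm_smul, smul_single, smul_eq_mul, mul_one]

theorem Matrix.star_mulVec_dotProduct_mulVec_mulVec {n R : Type*} [Fintype n] [CommRing R]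
    [StarRing R] (X Q : Matrix n n R) (v : n → R) :
    star (X *ᵥ v) ⬝ᵥ Q *ᵥ (X *ᵥ v) = star v ⬝ᵥ (Xᴴ * Q * X) *ᵥ v := by
  simp [star_mulVec, dotProduct_mulVec, vecMul_vecMul, Matrix.mul_assoc]

theorem Matrix.star_inv_mul_conjTranspose_mul_mul_inv {n R : Type*} [Fintype n] [DecidableEq n]
    [CommRing R] [StarRing R] {X : Matrix n n R} (hX : IsUnit X) (Q : Matrix n n R) :
    star X⁻¹ * (Xᴴ * Q * X) * X⁻¹ = Q := by
  have hXX : X * X⁻¹ = 1 := mul_nonsing_inv X ((isUnit_iff_isUnit_det X).mp hX)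
  calc star X⁻¹ * (Xᴴ * Q * X) * X⁻¹ = (X * X⁻¹)ᴴ * Q * (X * X⁻¹) := by
        simp only [star_eq_conjTranspose, conjTranspose_mul, Matrix.mul_assoc]
    _ = Q := by simp [hXX]

variable {A : Type*} [CStarAlgebra A] [PartialOrder A] [StarOrderedRing A]

theorem star_conj_sub_star_conj_le {m m' y y' : A} (hm : IsSelfAdjoint m) (hm' : m' ≤ m) :
    star y' * m' * y' - star y * m * y ≤ algebraMap ℝ A (‖m‖ * (‖y'‖ + ‖y‖) * ‖y' - y‖) := by
  have hsplit : star y' * m * y' - star y * m * y =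
      star (y' - y) * m * y' + star y * m * (y' - y) := by
    simp only [star_sub]; noncomm_ring
  have hnorm : ‖star y' * m * y' - star y * m * y‖ ≤ ‖m‖ * (‖y'‖ + ‖y‖) * ‖y' - y‖ := by
    rw [hsplit]
    calc _ ≤ ‖star (y' - y) * m * y'‖ + ‖star y * m * (y' - y)‖ := norm_add_le _ _
      _ ≤ ‖y' - y‖ * ‖m‖ * ‖y'‖ + ‖y‖ * ‖m‖ * ‖y' - y‖ := by
        gcongr <;> refine norm_mul₃_le.trans ?_ <;> rw [norm_star]
      _ = _ := by ring
  calc star y' * m' * y' - star y * m * y ≤ star y' * m * y' - star y * m * y :=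
        sub_le_sub_right (star_left_conjugate_le_conjugate hm' y') _
    _ ≤ algebraMap ℝ A ‖star y' * m * y' - star y * m * y‖ :=
        IsSelfAdjoint.le_algebraMap_norm_self ((hm.conjugate' y').sub (hm.conjugate' y))
    _ ≤ _ := algebraMap_mono A hnorm

theorem Matrix.sub_le_of_conjTranspose_mul_mul_le {n : Type*} [Fintype n] [DecidableEq n]
    {Q Q' X X' : Matrix n n ℂ} {c K e : ℝ} (hX : IsUnit X) (hX' : IsUnit X') (hQ : Q.IsHermitian)
    (hle : X'ᴴ * Q' * X' ≤ Xᴴ * Q * X) (hc : ‖Xᴴ * Q * X‖ ≤ c) (hK : ‖X⁻¹‖ ≤ K)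
    (hK' : ‖X'⁻¹‖ ≤ K) (he : ‖X - X'‖ ≤ e) :
    Q' - Q ≤ algebraMap ℝ _ (2 * c * K ^ 3 * e) := by
  have hK0 : 0 ≤ K := (norm_nonneg _).trans hK
  have he0 : 0 ≤ e := (norm_nonneg _).trans he
  have hc0 : 0 ≤ c := (norm_nonneg _).trans hc
  have hinv : ‖X'⁻¹ - X⁻¹‖ ≤ K * e * K := by
    rw [inv_sub_inv (iff_of_true hX' hX)]
    exact norm_mul₃_le.trans (by gcongr)
  conv_lhs => rw [← star_inv_mul_conjTranspose_mul_mul_inv hX Q,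
    ← star_inv_mul_conjTranspose_mul_mul_inv hX' Q']
  refine (star_conj_sub_star_conj_le (isHermitian_conjTranspose_mul_mul X hQ).isSelfAdjoint
    hle).trans (algebraMap_mono _ ?_)
  calc _ ≤ c * (K + K) * (K * e * K) := by gcongr
    _ = 2 * c * K ^ 3 * e := by ring

end General

namespace Paper

theorem MatLocAC.continuousOn {k l : ℕ} {I : Set ℝ} {X X' : ℝ → Matrix (Fin k) (Fin l) ℂ}
    (hX : MatLocAC I X X') (hI : I.OrdConnected) {a b : ℝ} (ha : a ∈ I) (hb : b ∈ I) :
    ContinuousOn X (Icc a b) := by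
  refine continuousOn_pi.mpr fun i => continuousOn_pi.mpr fun j => ?_
  have hprim := intervalIntegral.continuousOn_primitive_interval'
    (intervalIntegrable_of_integrableOn_Icc (fun a b ha hb => hX.1 a b ha hb i j) ha hb)
    left_mem_uIcc
  exact (continuousOn_const.add (hprim.mono Icc_subset_uIcc)).congr fun t ht =>
    hX.2 a t ha (hI.out ha hb ht) i j

theorem MatLocAC.mulVec {k l : ℕ} {I : Set ℝ} {X X' : ℝ → Matrix (Fin k) (Fin l) ℂ}
    (hX : MatLocAC I X X') (v : Fin l → ℂ) :
    VecLocAC I (fun t => X t *ᵥ v) (fun t => X' t *ᵥ v) := by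
  simp only [VecLocAC, mulVec_apply_eq_sum]
  refine ⟨fun a b ha hb i => integrable_finsetSum _ fun j _ => (hX.1 a b ha hb i j).mul_const _,
    fun s t hs ht i => ?_⟩
  have hint j : IntervalIntegrable (fun τ => X' τ i j) volume s t :=
    intervalIntegrable_of_integrableOn_Icc (fun a b ha hb => hX.1 a b ha hb i j) hs ht
  rw [intervalIntegral.integral_finsetSum fun j _ => (hint j).mul_const _]
  simp only [hX.2 s t hs ht i, add_mul, Finset.sum_add_distrib, intervalIntegral.integral_mul_const]

theorem vecMemLocLp_two_mulVec {k l : ℕ} {I : Set ℝ} {C : ℝ → Matrix (Fin k) (Fin l) ℂ}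
    {x : ℝ → Fin l → ℂ} (hC : MemLocLp 2 I C)
    (hx : ∀ a b, a ∈ I → b ∈ I → ContinuousOn x (Icc a b)) :
    VecMemLocLp 2 I (fun t => C t *ᵥ x t) := by
  intro a b ha hb i
  simp only [mulVec_apply_eq_sum]
  exact memLp_finsetSum _ fun j _ =>
    ((continuousOn_apply j _).comp (hx a b ha hb) (mapsTo_univ _ _)).memLp_top_Icc.mul'
      (r := 2) (hC a b ha hb i j)

theorem isSIOSol_zero_input {n m : ℕ} {I : Set ℝ} {A : ℝ → Matrix (Fin n) (Fin n) ℂ}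
    {B : ℝ → Matrix (Fin n) (Fin m) ℂ} {C : ℝ → Matrix (Fin m) (Fin n) ℂ}
    {D : ℝ → Matrix (Fin m) (Fin m) ℂ} {X X' : ℝ → Matrix (Fin n) (Fin n) ℂ}
    (hI : I.OrdConnected) (hC : MemLocLp 2 I C) (hX : MatLocAC I X X')
    (hode : ∀ᵐ t ∂volume, t ∈ I → X' t = A t * X t) (v : Fin n → ℂ) :
    IsSIOSol I A B C D (fun t => X t *ᵥ v) 0 (fun t => C t *ᵥ (X t *ᵥ v)) := by
  refine ⟨fun _ _ _ _ _ => MemLp.zero', vecMemLocLp_two_mulVec hC fun a b ha hb => ?_,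
    ⟨_, hX.mulVec v, ?_⟩, ae_of_all _ fun t _ => by simp⟩
  · exact (continuous_id.matrix_mulVec continuous_const).comp_continuousOn
      (hX.continuousOn hI ha hb)
  · filter_upwards [hode] with t hXt ht
    simp [hXt ht, mulVec_mulVec]

theorem IsStorage.conjTranspose_mul_mul_le_of_le {n m : ℕ} {I : Set ℝ}
    {A : ℝ → Matrix (Fin n) (Fin n) ℂ} {B : ℝ → Matrix (Fin n) (Fin m) ℂ}
    {C : ℝ → Matrix (Fin m) (Fin n) ℂ} {D : ℝ → Matrix (Fin m) (Fin m) ℂ}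
    {Q X X' : ℝ → Matrix (Fin n) (Fin n) ℂ} (hstor : IsStorage I A B C D (quadStorage Q))
    (hQ : ∀ t ∈ I, (Q t).IsHermitian) (hI : I.OrdConnected) (hC : MemLocLp 2 I C)
    (hX : MatLocAC I X X') (hode : ∀ᵐ t ∂volume, t ∈ I → X' t = A t * X t) {r s : ℝ}
    (hr : r ∈ I) (hs : s ∈ I) (hrs : r ≤ s) :
    (X s)ᴴ * Q s * X s ≤ (X r)ᴴ * Q r * X r := by
  have hherm := (isHermitian_conjTranspose_mul_mul (X r) (hQ r hr)).sub
    (isHermitian_conjTranspose_mul_mul (X s) (hQ s hs))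
  refine PosSemidef.of_dotProduct_mulVec_nonneg hherm fun v => ?_
  have hst := hstor.2.2 _ _ _ (isSIOSol_zero_input (B := B) (D := D) hI hC hX hode v) r s hr hs hrs
  simp only [quadStorage, supply, Pi.zero_apply, dotProduct_zero, Complex.zero_re,
    intervalIntegral.integral_zero, star_mulVec_dotProduct_mulVec_mulVec] at hst
  refine Complex.nonneg_iff.mpr ⟨?_, (hherm.im_star_dotProduct_mulVec_self v).symm⟩
  rw [sub_mulVec, dotProduct_sub, Complex.sub_re]
  linarith

theorem isAUCOn_of_sub_le_algebraMap {n : ℕ} {Q : ℝ → Matrix (Fin n) (Fin n) ℂ} {a b : ℝ}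
    {g : ℝ → ℝ} (hg : IntegrableOn g (Icc a b))
    (hQ : ∀ r s, a ≤ r → r ≤ s → s ≤ b → Q s - Q r ≤ algebraMap ℝ _ (∫ t in r..s, g t)) :
    IsAUCOn Q a b := by
  refine ⟨fun t => (g t : ℂ) • 1, fun t => ?_, fun i j => ?_, fun r s har hrs hsb => ?_⟩
  · simp [IsHermitian, conjTranspose_smul]
  · simp only [Matrix.smul_apply, smul_eq_mul]
    exact hg.ofReal.mul_const _
  · have hint : matInt (fun t => (g t : ℂ) • (1 : Matrix (Fin n) (Fin n) ℂ)) r s =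
        algebraMap ℝ _ (∫ t in r..s, g t) := by
      ext i j
      simp [matInt, intervalIntegral.integral_mul_const, intervalIntegral.integral_ofReal,
        Algebra.algebraMap_eq_smul_one]
    exact hint ▸ hQ r s har hrs hsb

theorem MatLocAC.l2_opNorm_sub_le {k l : ℕ} {I : Set ℝ} {X X' : ℝ → Matrix (Fin k) (Fin l) ℂ}
    (hX : MatLocAC I X X') {r s : ℝ} (hr : r ∈ I) (hs : s ∈ I) (hrs : r ≤ s) :
    ‖X s - X r‖ ≤ ∫ t in r..s, ∑ i, ∑ j, ‖X' t i j‖ * ‖single i j (1 : ℂ)‖ := by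
  have hII {f : ℝ → ℝ} (hf : IntegrableOn f (Icc r s)) : IntervalIntegrable f volume r s :=
    (intervalIntegrable_iff_integrableOn_Icc_of_le hrs).mpr hf
  have hint i j : IntegrableOn (fun t => ‖X' t i j‖ * ‖single i j (1 : ℂ)‖) (Icc r s) :=
    (hX.1 r s hr hs i j).norm.mul_const _
  rw [intervalIntegral.integral_finsetSum fun i _ =>
    hII (integrable_finsetSum _ fun j _ => hint i j)]
  refine (l2_opNorm_le_sum_norm_apply _).trans (Finset.sum_le_sum fun i _ => ?_)
  rw [intervalIntegral.integral_finsetSum fun j _ => hII (hint i j)]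
  refine Finset.sum_le_sum fun j _ => ?_
  rw [intervalIntegral.integral_mul_const, Matrix.sub_apply, hX.2 r s hr hs i j,
    add_sub_cancel_left]
  gcongr
  exact intervalIntegral.norm_integral_le_integral_norm hrs

theorem statement7_general {n m : ℕ} (I : Set ℝ) (hIconn : I.OrdConnected)
    (A : ℝ → Matrix (Fin n) (Fin n) ℂ) (B : ℝ → Matrix (Fin n) (Fin m) ℂ)
    (C : ℝ → Matrix (Fin m) (Fin n) ℂ) (D : ℝ → Matrix (Fin m) (Fin m) ℂ)
    (hLTV : IsLTV I A B C D)
    (Q : ℝ → Matrix (Fin n) (Fin n) ℂ) (hQpsd : ∀ t ∈ I, (Q t).PosSemidef)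
    (hstor : IsStorage I A B C D (quadStorage Q))
    (t0 : ℝ) (X : ℝ → Matrix (Fin n) (Fin n) ℂ) (hX : IsFundamental I A t0 X) :
    ∀ a b : ℝ, a ∈ I → b ∈ I → IsAUCOn Q a b := by
  obtain ⟨-, -, hXunit, X', hXac, hode⟩ := hX
  intro a b ha hb
  have hab : Icc a b ⊆ I := hIconn.out ha hb
  set M : ℝ → Matrix (Fin n) (Fin n) ℂ := fun t => (X t)ᴴ * Q t * X t
  have hM_le {r s} (hr : r ∈ I) (hs : s ∈ I) (hrs : r ≤ s) : M s ≤ M r :=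
    hstor.conjTranspose_mul_mul_le_of_le (fun t ht => (hQpsd t ht).isHermitian) hIconn
      hLTV.2.2.1 hXac hode hr hs hrs
  obtain ⟨K, hK⟩ := isCompact_Icc.exists_bound_of_continuousOn
    ((hXac.continuousOn hIconn ha hb).matrix_inv fun t ht => hXunit t (hab ht))
  set g : ℝ → ℝ := fun t => ∑ i, ∑ j, ‖X' t i j‖ * ‖single i j (1 : ℂ)‖
  have hg : IntegrableOn g (Icc a b) := integrable_finsetSum _ fun i _ =>
    integrable_finsetSum _ fun j _ => (hXac.1 a b ha hb i j).norm.mul_const _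
  refine isAUCOn_of_sub_le_algebraMap (hg.const_mul (2 * ‖M a‖ * K ^ 3))
    fun r s har hrs hsb => ?_
  have hr : r ∈ Icc a b := ⟨har, hrs.trans hsb⟩
  have hs : s ∈ Icc a b := ⟨har.trans hrs, hsb⟩
  have hMr : ‖M r‖ ≤ ‖M a‖ := CStarAlgebra.norm_le_norm_of_nonneg_of_le
    ((hQpsd r (hab hr)).conjTranspose_mul_mul_same _).nonneg (hM_le ha (hab hr) har)
  have hXrs : ‖X r - X s‖ ≤ ∫ t in r..s, g t :=
    norm_sub_rev (X s) (X r) ▸ hXac.l2_opNorm_sub_le (hab hr) (hab hs) hrs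
  rw [intervalIntegral.integral_const_mul]
  exact sub_le_of_conjTranspose_mul_mul_le (hXunit r (hab hr)) (hXunit s (hab hs))
    (hQpsd r (hab hr)).isHermitian (hM_le (hab hr) (hab hs) hrs) hMr (hK r hr) (hK s hs) hXrs

/-- the matrix function inducing a quadratic storage function of a passive
LTV system is locally absolutely upper semicontinuous. -/
theorem statement7 {n m : ℕ} (I : Set ℝ) (hIopen : IsOpen I) (hIconn : I.OrdConnected)
    (A : ℝ → Matrix (Fin n) (Fin n) ℂ) (B : ℝ → Matrix (Fin n) (Fin m) ℂ)
    (C : ℝ → Matrix (Fin m) (Fin n) ℂ) (D : ℝ → Matrix (Fin m) (Fin m) ℂ)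
    (hLTV : IsLTV I A B C D)
    (Q : ℝ → Matrix (Fin n) (Fin n) ℂ) (hQpsd : ∀ t ∈ I, (Q t).PosSemidef)
    (hstor : IsStorage I A B C D (quadStorage Q))
    (t0 : ℝ) (X : ℝ → Matrix (Fin n) (Fin n) ℂ) (hX : IsFundamental I A t0 X) :
    ∀ a b : ℝ, a ∈ I → b ∈ I → IsAUCOn Q a b :=
  statement7_general I hIconn A B C D hLTV Q hQpsd hstor t0 X hX

end Paper
end

section
/- Consider an LTV system on an open interval I ⊆ ℝ with coefficients A, B, C, D, and assume that for every t0 ∈ I, x0 ∈ ℂ^n, and u ∈ L²_loc(I, ℂ^m) there exists exactly one locally absolutely continuous x : I → ℂ^n with x(t0) = x0 and ẋ(t) = A(t)x(t) + B(t)u(t) for a.e. t ∈ I. Suppose the available storage V_a(t0,x0) := sup { −∫_{t0}^{t1} Re(y(t)* u(t)) dt : t1 ∈ I, t1 ≥ t0, (x,u,y) a state-input-output solution with x(t0) = x0 } is finite for every t0 ∈ I and x0 ∈ ℂ^n. Then there exists Q : I → ℂ^{n×n}, pointwise Hermitian positive semidefinite, such that V_a(t0, x0) = ½ x0* Q(t0)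 x0 for all t0 ∈ I and x0 ∈ ℂ^n. -/
/-!
Fix `t0`. Scaling a solution by `c` scales its supply by `|c|²`, so `V = V_a(t0, ·)` satisfies
`V (c • x) = |c|² V x`. Extending two solutions to a common horizon by zero input, their half-sum
and half-difference start at `x₁` and `x₂`; since the supply is a quadratic form in `(u, y)`,
this gives the parallelogram law for `V`. A nonnegative function with these two properties is a
Hermitian quadratic form: its real polarization is additive and bounded near `0`, hence
continuous and `ℝ`-linear, and homogeneity under multiplication by `I` makes the complex
polarization sesquilinear.
-/

open MeasureTheory Matrix Set Filter Topology
open scoped ComplexOrder ENNReal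

namespace Paper

section Polarization

variable {E : Type*} [AddCommGroup E]

noncomputable def polarRe (W : E → ℝ) (x y : E) : ℝ := (W (x + y) - W (x - y)) / 4

variable {W : E → ℝ}

lemma polarRe_neg_right (x y : E) : polarRe W x (-y) = -polarRe W x y := by
  simp only [polarRe, ← sub_eq_add_neg, sub_neg_eq_add]
  ring

lemma abs_polarRe_le (hpar : ∀ x y, W (x + y) + W (x - y) = 2 * W x + 2 * W y)
    (hnonneg : ∀ x, 0 ≤ W x) (x y : E) : |polarRe W x y| ≤ (W x + W y) / 2 := by
  rw [polarRe, abs_le]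
  constructor <;> linarith [hpar x y, hnonneg (x + y), hnonneg (x - y)]

variable [Module ℂ E]

noncomputable def polarSesq (W : E → ℝ) (x y : E) : ℂ :=
  polarRe W x y - Complex.I * polarRe W x (Complex.I • y)

variable (hsmul : ∀ (c : ℂ) x, W (c • x) = ‖c‖ ^ 2 * W x)
  (hpar : ∀ x y, W (x + y) + W (x - y) = 2 * W x + 2 * W y)
  (hnonneg : ∀ x, 0 ≤ W x)

section Homogeneous

include hsmul

lemma map_zero_of_homogeneous : W 0 = 0 := by
  simpa using hsmul 0 0

lemma map_neg_of_homogeneous (x : E) : W (-x) = W x := by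
  simpa using hsmul (-1) x

lemma polarRe_comm (x y : E) : polarRe W x y = polarRe W y x := by
  rw [polarRe, polarRe, ← map_neg_of_homogeneous hsmul (y - x), neg_sub, add_comm]

lemma polarRe_self (x : E) : polarRe W x x = W x := by
  rw [polarRe, ← two_smul ℂ x, sub_self, hsmul, map_zero_of_homogeneous hsmul]
  norm_num

lemma polarRe_smul_smul (c : ℂ) (x y : E) :
    polarRe W (c • x) (c • y) = ‖c‖ ^ 2 * polarRe W x y := by
  rw [polarRe, polarRe, ← smul_add, ← smul_sub, hsmul, hsmul]
  ring

lemma polarRe_I_smul_left (x y : E) :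
    polarRe W (Complex.I • x) y = -polarRe W x (Complex.I • y) := by
  have hy : y = Complex.I • -(Complex.I • y) := by
    rw [smul_neg, smul_smul, Complex.I_mul_I, neg_one_smul, neg_neg]
  rw [hy, polarRe_smul_smul hsmul, polarRe_neg_right, ← hy]
  simp

lemma polarRe_I_smul_self (x : E) : polarRe W x (Complex.I • x) = 0 := by
  have := polarRe_I_smul_left hsmul x x
  rw [polarRe_comm hsmul] at this
  linarith

lemma polarSesq_self (x : E) : polarSesq W x x = W x := by
  simp [polarSesq, polarRe_I_smul_self hsmul, polarRe_self hsmul]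

lemma conj_polarSesq (x y : E) : starRingEnd ℂ (polarSesq W x y) = polarSesq W y x := by
  simp only [polarSesq, map_sub, map_mul, Complex.conj_I, Complex.conj_ofReal]
  rw [polarRe_comm hsmul y x, polarRe_comm hsmul y, polarRe_I_smul_left hsmul]
  push_cast
  ring

end Homogeneous

section Parallelogram

include hsmul hpar

lemma polarRe_add_left (x y z : E) :
    polarRe W (x + y) z = polarRe W x z + polarRe W y z := by
  have midpoint : ∀ a b : E,
      polarRe W a z + polarRe W b z = 2 * polarRe W ((2⁻¹ : ℂ) • (a + b)) z := by
    intro a b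
    have h₁ := hpar ((2⁻¹ : ℂ) • (a + b) + z) ((2⁻¹ : ℂ) • (a - b))
    have h₂ := hpar ((2⁻¹ : ℂ) • (a + b) - z) ((2⁻¹ : ℂ) • (a - b))
    rw [show (2⁻¹ : ℂ) • (a + b) + z + (2⁻¹ : ℂ) • (a - b) = a + z by module,
      show (2⁻¹ : ℂ) • (a + b) + z - (2⁻¹ : ℂ) • (a - b) = b + z by module] at h₁
    rw [show (2⁻¹ : ℂ) • (a + b) - z + (2⁻¹ : ℂ) • (a - b) = a - z by module,
      show (2⁻¹ : ℂ) • (a + b) - z - (2⁻¹ : ℂ) • (a - b) = b - z by module] at h₂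
    simp only [polarRe]
    linarith
  have zero_left : polarRe W 0 z = 0 := by
    rw [polarRe_comm hsmul, polarRe, add_zero, sub_zero]
    ring
  have half := midpoint (x + y) 0
  rw [add_zero, zero_left, add_zero] at half
  rw [midpoint x y]
  linarith

lemma polarRe_add_right (x y z : E) :
    polarRe W x (y + z) = polarRe W x y + polarRe W x z := by
  rw [polarRe_comm hsmul, polarRe_add_left hsmul hpar, polarRe_comm hsmul y,
    polarRe_comm hsmul z]

lemma polarSesq_add_right (x y z : E) :
    polarSesq W x (y + z) = polarSesq W x y + polarSesq W x z := by
  simp only [polarSesq, smul_add, polarRe_add_right hsmul hpar]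
  push_cast
  ring

include hnonneg

/-- An additive map bounded near `0` is continuous, hence `ℝ`-linear. -/
lemma polarRe_real_smul_right (r : ℝ) (x y : E) :
    polarRe W x ((r : ℂ) • y) = r * polarRe W x y := by
  let g : ℝ →+ ℝ := AddMonoidHom.mk' (fun s => polarRe W x ((s : ℂ) • y)) fun a b => by
    simp only [Complex.ofReal_add, add_smul, polarRe_add_right hsmul hpar]
  have hbdd : Bornology.IsBounded (g '' Metric.closedBall 0 1) := by
    refine isBounded_iff_forall_norm_le.2 ⟨(W x + W y) / 2, ?_⟩
    rintro _ ⟨s, hs, rfl⟩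
    have hs : s ^ 2 ≤ 1 := by
      rw [Metric.mem_closedBall, dist_zero_right, Real.norm_eq_abs] at hs
      nlinarith [abs_nonneg s, sq_abs s]
    have hle := abs_polarRe_le hpar hnonneg x ((s : ℂ) • y)
    rw [hsmul, Complex.norm_real, Real.norm_eq_abs, sq_abs] at hle
    show ‖polarRe W x ((s : ℂ) • y)‖ ≤ _
    rw [Real.norm_eq_abs]
    nlinarith [hnonneg y]
  have hg := map_real_smul g
    (g.continuous_of_isBounded_nhds_zero (Metric.closedBall_mem_nhds 0 one_pos) hbdd) r 1
  simpa [g] using hg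

lemma polarSesq_smul_right (c : ℂ) (x y : E) :
    polarSesq W x (c • y) = c * polarSesq W x y := by
  have real_smul (r : ℝ) (v : E) : polarSesq W x ((r : ℂ) • v) = r * polarSesq W x v := by
    simp only [polarSesq, smul_comm Complex.I (r : ℂ) v,
      polarRe_real_smul_right hsmul hpar hnonneg]
    push_cast
    ring
  have I_smul (v : E) : polarSesq W x (Complex.I • v) = Complex.I * polarSesq W x v := by
    simp only [polarSesq, smul_smul, Complex.I_mul_I, neg_one_smul, polarRe_neg_right]
    push_cast
    linear_combination (polarRe W x (Complex.I • v) : ℂ) * Complex.I_sq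
  have hc : c • y = (c.re : ℂ) • y + (c.im : ℂ) • Complex.I • y := by
    rw [smul_smul, ← add_smul, Complex.re_add_im]
  rw [hc, polarSesq_add_right hsmul hpar, real_smul, real_smul, I_smul]
  linear_combination polarSesq W x y * Complex.re_add_im c

end Parallelogram

end Polarization

section PolarMatrix

variable {ι : Type*} [Fintype ι] [DecidableEq ι]

noncomputable def polarMatrix (W : (ι → ℂ) → ℝ) : Matrix ι ι ℂ :=
  .of fun i j => polarSesq W (Pi.single i 1) (Pi.single j 1)

variable {W : (ι → ℂ) → ℝ} (hsmul : ∀ (c : ℂ) x, W (c • x) = ‖c‖ ^ 2 * W x)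
  (hpar : ∀ x y, W (x + y) + W (x - y) = 2 * W x + 2 * W y)
  (hnonneg : ∀ x, 0 ≤ W x)

include hsmul hpar hnonneg

lemma polarSesq_eq_sum (x y : ι → ℂ) :
    polarSesq W x y = ∑ j, y j * polarSesq W x (Pi.single j 1) := by
  let φ : (ι → ℂ) →ₗ[ℂ] ℂ :=
    { toFun := polarSesq W x
      map_add' := polarSesq_add_right hsmul hpar x
      map_smul' := fun c v => polarSesq_smul_right hsmul hpar hnonneg c x v }
  conv_lhs => rw [pi_eq_sum_univ' y]
  exact map_sum φ _ _ |>.trans (by simp [φ])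

lemma star_dotProduct_polarMatrix_mulVec (x : ι → ℂ) :
    star x ⬝ᵥ (polarMatrix W *ᵥ x) = W x := by
  have hmulVec : polarMatrix W *ᵥ x = fun i => polarSesq W (Pi.single i 1) x := by
    ext i
    simp [mulVec, dotProduct, polarMatrix, polarSesq_eq_sum hsmul hpar hnonneg _ x, mul_comm]
  calc star x ⬝ᵥ (polarMatrix W *ᵥ x)
      = ∑ i, starRingEnd ℂ (x i) * polarSesq W (Pi.single i 1) x := by
        simp [hmulVec, dotProduct]
    _ = starRingEnd ℂ (∑ i, x i * polarSesq W x (Pi.single i 1)) := by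
        simp only [map_sum, map_mul, conj_polarSesq hsmul]
    _ = W x := by
        rw [← polarSesq_eq_sum hsmul hpar hnonneg, polarSesq_self hsmul, Complex.conj_ofReal]

lemma polarMatrix_posSemidef : (polarMatrix W).PosSemidef := by
  refine posSemidef_iff_dotProduct_mulVec.2 ⟨?_, fun x => ?_⟩
  · ext i j
    simp [polarMatrix, conj_polarSesq hsmul]
  · rw [star_dotProduct_polarMatrix_mulVec hsmul hpar hnonneg, Complex.zero_le_real]
    exact hnonneg x

end PolarMatrix

section LocalIntegrability

variable {I : Set ℝ} {k : ℕ}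

lemma intervalIntegrable_of_integrableOn_Icc {E : Type*} [NormedAddCommGroup E] {f : ℝ → E}
    (hf : ∀ a b : ℝ, a ∈ I → b ∈ I → IntegrableOn f (Icc a b)) {c d : ℝ} (hc : c ∈ I)
    (hd : d ∈ I) : IntervalIntegrable f volume c d :=
  (hf _ _ (min_rec' (· ∈ I) hc hd) (max_rec' (· ∈ I) hc hd)).intervalIntegrable

lemma VecMemLocLp.smul_add_smul {f g : ℝ → Fin k → ℂ} (α β : ℂ) (hf : VecMemLocLp 2 I f)
    (hg : VecMemLocLp 2 I g) : VecMemLocLp 2 I (fun t => α • f t + β • g t) :=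
  fun a b ha hb i => ((hf a b ha hb i).const_mul α).add ((hg a b ha hb i).const_mul β)

lemma VecMemLocLp.ite_le {k : ℕ} {p : ℝ≥0∞} {u : ℝ → Fin k → ℂ} (hu : VecMemLocLp p I u)
    (t1 : ℝ) : VecMemLocLp p I (fun t => if t ≤ t1 then u t else 0) := by
  intro a b ha hb i
  have hind : (fun t => (if t ≤ t1 then u t else 0) i) = (Iic t1).indicator (u · i) := by
    funext t
    by_cases h : t ≤ t1 <;> simp [h]
  rw [hind]
  exact (hu a b ha hb i).indicator measurableSet_Iic

lemma integrableOn_re_star_dotProduct {u y : ℝ → Fin k → ℂ} (hu : VecMemLocLp 2 I u)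
    (hy : VecMemLocLp 2 I y) {a b : ℝ} (ha : a ∈ I) (hb : b ∈ I) :
    IntegrableOn (fun t => (star (y t) ⬝ᵥ u t).re) (Icc a b) := by
  simp only [dotProduct, Complex.re_sum]
  exact integrable_finsetSum _ fun j _ =>
    ((hy a b ha hb j).star.integrable_mul (hu a b ha hb j)).re

lemma VecLocAC.continuousOn {x x' : ℝ → Fin k → ℂ} (hI : I.OrdConnected) (h : VecLocAC I x x')
    {a b : ℝ} (ha : a ∈ I) (hb : b ∈ I) (i : Fin k) :
    ContinuousOn (fun t => x t i) (Icc a b) := by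
  have hprim := intervalIntegral.continuousOn_primitive_interval (a := a) (b := b)
    (h.1 _ _ (min_rec' (· ∈ I) ha hb) (max_rec' (· ∈ I) ha hb) i)
  refine ((continuousOn_const (c := x a i)).add hprim).mono Icc_subset_uIcc |>.congr ?_
  intro t ht
  exact h.2 a t ha (hI.out ha hb ht) i

lemma VecLocAC.memLp_top {x x' : ℝ → Fin k → ℂ} (hI : I.OrdConnected) (h : VecLocAC I x x')
    {a b : ℝ} (ha : a ∈ I) (hb : b ∈ I) (i : Fin k) :
    MemLp (fun t => x t i) ⊤ (volume.restrict (Icc a b)) := by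
  have hcont := h.continuousOn hI ha hb i
  obtain ⟨M, hM⟩ := isCompact_Icc.exists_bound_of_continuousOn hcont
  refine memLp_top_of_bound (hcont.aestronglyMeasurable measurableSet_Icc) M ?_
  filter_upwards [ae_restrict_mem measurableSet_Icc] with t ht using hM t ht

lemma VecLocAC.of_eq_add_integral {k : ℕ} {x x' : ℝ → Fin k → ℂ}
    (hint : ∀ a b : ℝ, a ∈ I → b ∈ I → ∀ i, IntegrableOn (fun t => x' t i) (Icc a b))
    {p : ℝ} (hp : p ∈ I) (hx : ∀ r ∈ I, ∀ i, x r i = x p i + ∫ τ in p..r, x' τ i) :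
    VecLocAC I x x' := by
  refine ⟨hint, fun s t hs ht i => ?_⟩
  have hadd := intervalIntegral.integral_add_adjacent_intervals
    (intervalIntegrable_of_integrableOn_Icc (fun a b ha hb => hint a b ha hb i) hs hp)
    (intervalIntegrable_of_integrableOn_Icc (fun a b ha hb => hint a b ha hb i) hp ht)
  rw [hx t ht, hx s hs, ← hadd, intervalIntegral.integral_symm p s]
  ring

lemma VecLocAC.smul_add_smul {k : ℕ} {x x' z z' : ℝ → Fin k → ℂ} (α β : ℂ)
    (hx : VecLocAC I x x') (hz : VecLocAC I z z') :
    VecLocAC I (fun t => α • x t + β • z t) (fun t => α • x' t + β • z' t) := by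
  refine ⟨fun a b ha hb i => ((hx.1 a b ha hb i).const_mul α).add ((hz.1 a b ha hb i).const_mul β),
    fun s t hs ht i => ?_⟩
  have hx' := intervalIntegrable_of_integrableOn_Icc (fun a b ha hb => hx.1 a b ha hb i) hs ht
  have hz' := intervalIntegrable_of_integrableOn_Icc (fun a b ha hb => hz.1 a b ha hb i) hs ht
  simp only [Pi.add_apply, Pi.smul_apply, smul_eq_mul]
  rw [intervalIntegral.integral_add (hx'.const_mul α) (hz'.const_mul β),
    intervalIntegral.integral_const_mul, intervalIntegral.integral_const_mul,
    hx.2 s t hs ht i, hz.2 s t hs ht i]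
  ring

lemma VecLocAC.ite_le {k : ℕ} {x x' w w' : ℝ → Fin k → ℂ} {t1 : ℝ} (ht1 : t1 ∈ I)
    (hx : VecLocAC I x x') (hw : VecLocAC I w w') (hwx : w t1 = x t1) :
    VecLocAC I (fun t => if t ≤ t1 then x t else w t)
      (fun t => if t ≤ t1 then x' t else w' t) := by
  refine .of_eq_add_integral (fun a b ha hb i => ?_) ht1 fun r hr i => ?_
  · have hpw : (fun t => (if t ≤ t1 then x' t else w' t) i)
        = (Iic t1).piecewise (x' · i) (w' · i) := by
      funext t
      by_cases h : t ≤ t1 <;> simp [Set.piecewise, h]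
    rw [IntegrableOn, hpw]
    exact .piecewise measurableSet_Iic (hx.1 a b ha hb i).integrableOn
      (hw.1 a b ha hb i).integrableOn
  · simp only [le_refl, if_true]
    rcases le_or_gt r t1 with hr1 | hr1
    · rw [if_pos hr1, hx.2 t1 r ht1 hr i, intervalIntegral.integral_congr fun τ hτ => ?_]
      rw [uIcc_of_ge hr1] at hτ
      simp [hτ.2]
    · rw [if_neg hr1.not_ge, hw.2 t1 r ht1 hr i, hwx,
        intervalIntegral.integral_congr_ae (ae_of_all _ fun τ hτ => ?_)]
      rw [uIoc_of_le hr1.le] at hτ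
      simp [hτ.1.not_ge]

lemma supply_smul (c : ℂ) (u y : ℝ → Fin k → ℂ) (t0 t1 : ℝ) :
    supply (fun t => c • u t) (fun t => c • y t) t0 t1 = ‖c‖ ^ 2 * supply u y t0 t1 := by
  rw [supply, supply, ← intervalIntegral.integral_const_mul]
  congr 1 with t
  rw [star_smul, smul_dotProduct, dotProduct_smul, smul_smul, smul_eq_mul, RCLike.star_def,
    Complex.conj_mul', ← Complex.ofReal_pow, Complex.re_ofReal_mul]

lemma supply_midpoint_add_supply_midpoint {u₁ y₁ u₂ y₂ : ℝ → Fin k → ℂ}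
    (hu₁ : VecMemLocLp 2 I u₁) (hy₁ : VecMemLocLp 2 I y₁)
    (hu₂ : VecMemLocLp 2 I u₂) (hy₂ : VecMemLocLp 2 I y₂) {t0 t1 : ℝ} (ht0 : t0 ∈ I)
    (ht1 : t1 ∈ I) :
    supply (fun t => (2⁻¹ : ℂ) • u₁ t + (2⁻¹ : ℂ) • u₂ t)
        (fun t => (2⁻¹ : ℂ) • y₁ t + (2⁻¹ : ℂ) • y₂ t) t0 t1
      + supply (fun t => (2⁻¹ : ℂ) • u₁ t + (-2⁻¹ : ℂ) • u₂ t)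
        (fun t => (2⁻¹ : ℂ) • y₁ t + (-2⁻¹ : ℂ) • y₂ t) t0 t1
      = 2⁻¹ * supply u₁ y₁ t0 t1 + 2⁻¹ * supply u₂ y₂ t0 t1 := by
  have hint {u y : ℝ → Fin k → ℂ} (hu : VecMemLocLp 2 I u) (hy : VecMemLocLp 2 I y) :=
    intervalIntegrable_of_integrableOn_Icc
      (fun a b ha hb => integrableOn_re_star_dotProduct hu hy ha hb) ht0 ht1
  simp only [supply]
  rw [← intervalIntegral.integral_add
      (hint (hu₁.smul_add_smul _ _ hu₂) (hy₁.smul_add_smul _ _ hy₂))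
      (hint (hu₁.smul_add_smul _ _ hu₂) (hy₁.smul_add_smul _ _ hy₂)),
    ← intervalIntegral.integral_const_mul, ← intervalIntegral.integral_const_mul,
    ← intervalIntegral.integral_add ((hint hu₁ hy₁).const_mul _) ((hint hu₂ hy₂).const_mul _)]
  congr 1 with t
  simp only [star_add, star_smul, add_dotProduct, dotProduct_add, smul_dotProduct,
    dotProduct_smul, smul_eq_mul, RCLike.star_def, map_inv₀, map_neg, Complex.conj_ofNat,
    Complex.add_re, Complex.mul_re]
  norm_num
  ring

end LocalIntegrability

section Solutions

variable {n m : ℕ} {I : Set ℝ}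
  {A : ℝ → Matrix (Fin n) (Fin n) ℂ} {B : ℝ → Matrix (Fin n) (Fin m) ℂ}
  {C : ℝ → Matrix (Fin m) (Fin n) ℂ} {D : ℝ → Matrix (Fin m) (Fin m) ℂ}

lemma vecMemLocLp_output (hI : I.OrdConnected) (hC : MemLocLp 2 I C) (hD : MemLocLp ⊤ I D)
    {x x' : ℝ → Fin n → ℂ} (hx : VecLocAC I x x') {u : ℝ → Fin m → ℂ} (hu : VecMemLocLp 2 I u) :
    VecMemLocLp 2 I (fun t => C t *ᵥ x t + D t *ᵥ u t) := by
  intro a b ha hb i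
  simp only [Pi.add_apply, mulVec, dotProduct]
  refine (memLp_finsetSum _ fun j _ => ?_).add (memLp_finsetSum _ fun j _ => ?_)
  · exact (hx.memLp_top hI ha hb j).mul' (hC a b ha hb i j)
  · exact (hu a b ha hb j).mul' (hD a b ha hb i j)

lemma IsSIOSol.smul_add_smul (α β : ℂ) {x z : ℝ → Fin n → ℂ} {u y v w : ℝ → Fin m → ℂ}
    (h₁ : IsSIOSol I A B C D x u y) (h₂ : IsSIOSol I A B C D z v w) :
    IsSIOSol I A B C D (fun t => α • x t + β • z t) (fun t => α • u t + β • v t)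
      (fun t => α • y t + β • w t) := by
  obtain ⟨hu, hy, ⟨x', hx, hx'⟩, hyx⟩ := h₁
  obtain ⟨hv, hw, ⟨z', hz, hz'⟩, hwz⟩ := h₂
  refine ⟨hu.smul_add_smul α β hv, hy.smul_add_smul α β hw,
    ⟨_, hx.smul_add_smul α β hz, ?_⟩, ?_⟩
  · filter_upwards [hx', hz'] with t hxt hzt htI
    rw [hxt htI, hzt htI]
    simp only [mulVec_add, mulVec_smul]
    module
  · filter_upwards [hyx, hwz] with t hyt hwt htI
    rw [hyt htI, hwt htI]
    simp only [mulVec_add, mulVec_smul]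
    module

lemma IsSIOSol.smul (c : ℂ) {x : ℝ → Fin n → ℂ} {u y : ℝ → Fin m → ℂ}
    (h : IsSIOSol I A B C D x u y) :
    IsSIOSol I A B C D (fun t => c • x t) (fun t => c • u t) (fun t => c • y t) := by
  simpa using h.smul_add_smul c 0 h

def StateEquationSolvable (I : Set ℝ) (A : ℝ → Matrix (Fin n) (Fin n) ℂ)
    (B : ℝ → Matrix (Fin n) (Fin m) ℂ) : Prop :=
  ∀ t0 ∈ I, ∀ x0 : Fin n → ℂ, ∀ u : ℝ → Fin m → ℂ, VecMemLocLp 2 I u →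
    ∃ x x' : ℝ → Fin n → ℂ, VecLocAC I x x' ∧
      (∀ᵐ t ∂volume, t ∈ I → x' t = A t *ᵥ x t + B t *ᵥ u t) ∧ x t0 = x0

lemma exists_isSIOSol_zero_input_after (hI : I.OrdConnected) (hC : MemLocLp 2 I C)
    (hD : MemLocLp ⊤ I D) (hsolv : StateEquationSolvable I A B) {x : ℝ → Fin n → ℂ}
    {u y : ℝ → Fin m → ℂ} (hsol : IsSIOSol I A B C D x u y) {t0 t1 s : ℝ} (ht0 : t0 ∈ I)
    (ht1 : t1 ∈ I) (hs : s ∈ I) (h01 : t0 ≤ t1) (h1s : t1 ≤ s) :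
    ∃ z v w, IsSIOSol I A B C D z v w ∧ z t0 = x t0 ∧ supply v w t0 s = supply u y t0 t1 := by
  obtain ⟨hu, -, ⟨x', hx, hx'⟩, hyx⟩ := hsol
  set v : ℝ → Fin m → ℂ := fun t => if t ≤ t1 then u t else 0
  have hv : VecMemLocLp 2 I v := hu.ite_le t1
  obtain ⟨w, w', hw, hw', hwx⟩ := hsolv t1 ht1 (x t1) v hv
  set z : ℝ → Fin n → ℂ := fun t => if t ≤ t1 then x t else w t
  have hz : VecLocAC I z _ := hx.ite_le ht1 hw hwx
  set yz : ℝ → Fin m → ℂ := fun t => C t *ᵥ z t + D t *ᵥ v t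
  have hyz : VecMemLocLp 2 I yz := vecMemLocLp_output hI hC hD hz hv
  have hsolz : IsSIOSol I A B C D z v yz := by
    refine ⟨hv, hyz, ⟨_, hz, ?_⟩, ae_of_all _ fun _ _ => rfl⟩
    filter_upwards [hx', hw'] with t hxt hwt htI
    by_cases h : t ≤ t1 <;> simp [z, v, h, hxt htI, hwt htI]
  refine ⟨z, v, yz, hsolz, if_pos h01, ?_⟩
  have hint {a b : ℝ} (ha : a ∈ I) (hb : b ∈ I) :=
    intervalIntegrable_of_integrableOn_Icc
      (fun a b ha hb => integrableOn_re_star_dotProduct hv hyz ha hb) ha hb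
  have hinit : supply v yz t0 t1 = supply u y t0 t1 := by
    refine intervalIntegral.integral_congr_ae ?_
    filter_upwards [hyx] with t hyt ht
    rw [uIoc_of_le h01] at ht
    rw [hyt (hI.out ht0 ht1 (Ioc_subset_Icc_self ht))]
    simp [yz, z, v, ht.2]
  have htail : ∫ t in t1..s, (star (yz t) ⬝ᵥ v t).re = 0 := by
    refine intervalIntegral.integral_zero_ae (ae_of_all _ fun t ht => ?_)
    rw [uIoc_of_le h1s] at ht
    simp [v, ht.1.not_ge]
  rw [supply, ← intervalIntegral.integral_add_adjacent_intervals (hint ht0 ht1) (hint ht1 hs),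
    htail, add_zero]
  exact hinit

end Solutions

section AvailableStorage

open scoped Pointwise

variable {n m : ℕ} {I : Set ℝ}
  {A : ℝ → Matrix (Fin n) (Fin n) ℂ} {B : ℝ → Matrix (Fin n) (Fin m) ℂ}
  {C : ℝ → Matrix (Fin m) (Fin n) ℂ} {D : ℝ → Matrix (Fin m) (Fin m) ℂ}

noncomputable def availableStorage (I : Set ℝ) (A : ℝ → Matrix (Fin n) (Fin n) ℂ)
    (B : ℝ → Matrix (Fin n) (Fin m) ℂ) (C : ℝ → Matrix (Fin m) (Fin n) ℂ)
    (D : ℝ → Matrix (Fin m) (Fin m) ℂ) (t0 : ℝ) (x0 : Fin n → ℂ) : ℝ :=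
  sSup (supplySet I A B C D t0 x0)

lemma smul_mem_supplySet (c : ℂ) {t0 : ℝ} {x0 : Fin n → ℂ} {v : ℝ}
    (hv : v ∈ supplySet I A B C D t0 x0) : ‖c‖ ^ 2 * v ∈ supplySet I A B C D t0 (c • x0) := by
  obtain ⟨t1, x, u, y, ht1, h01, hsol, hx0, rfl⟩ := hv
  exact ⟨t1, _, _, _, ht1, h01, hsol.smul c, by rw [hx0], by rw [supply_smul, mul_neg]⟩

lemma supplySet_smul {c : ℂ} (hc : c ≠ 0) (t0 : ℝ) (x0 : Fin n → ℂ) :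
    supplySet I A B C D t0 (c • x0) = (‖c‖ ^ 2) • supplySet I A B C D t0 x0 := by
  refine Subset.antisymm (fun v hv => ⟨_, inv_smul_smul₀ hc x0 ▸ smul_mem_supplySet c⁻¹ hv, ?_⟩) ?_
  · show ‖c‖ ^ 2 * (‖c⁻¹‖ ^ 2 * v) = v
    rw [norm_inv, ← mul_assoc, ← mul_pow, mul_inv_cancel₀ (norm_ne_zero_iff.2 hc),
      one_pow, one_mul]
  · rintro _ ⟨v, hv, rfl⟩
    exact smul_mem_supplySet c hv

/-- At `c = 0` this is `V_a(t0, 0) = 0`, which follows from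
`supplySet t0 0 = 4 • supplySet t0 0`. -/
lemma availableStorage_smul (t0 : ℝ) (c : ℂ) (x0 : Fin n → ℂ) :
    availableStorage I A B C D t0 (c • x0) = ‖c‖ ^ 2 * availableStorage I A B C D t0 x0 := by
  have hsmul {c : ℂ} (hc : c ≠ 0) (x0 : Fin n → ℂ) :
      availableStorage I A B C D t0 (c • x0) = ‖c‖ ^ 2 * availableStorage I A B C D t0 x0 := by
    rw [availableStorage, supplySet_smul hc, Real.sSup_smul_of_nonneg (sq_nonneg _),
      smul_eq_mul, availableStorage]
  rcases eq_or_ne c 0 with rfl | hc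
  · have h0 := hsmul two_ne_zero (0 : Fin n → ℂ)
    rw [smul_zero, Complex.norm_two] at h0
    rw [zero_smul, norm_zero]
    linarith
  · exact hsmul hc x0

variable (hI : I.OrdConnected) (hC : MemLocLp 2 I C) (hD : MemLocLp ⊤ I D)
  (hsolv : StateEquationSolvable I A B)
  (hfin : ∀ t0 ∈ I, ∀ x0 : Fin n → ℂ, BddAbove (supplySet I A B C D t0 x0))

include hI hC hD hsolv

lemma zero_mem_supplySet {t0 : ℝ} (ht0 : t0 ∈ I) (x0 : Fin n → ℂ) :
    0 ∈ supplySet I A B C D t0 x0 := by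
  have hu : VecMemLocLp 2 I (fun _ => (0 : Fin m → ℂ)) := fun a b _ _ i => MemLp.zero
  obtain ⟨x, x', hx, hx', hx0⟩ := hsolv t0 ht0 x0 _ hu
  have hsol : IsSIOSol I A B C D x (fun _ => 0) (fun t => C t *ᵥ x t + D t *ᵥ 0) :=
    ⟨hu, vecMemLocLp_output hI hC hD hx hu, ⟨x', hx, hx'⟩, ae_of_all _ fun _ _ => rfl⟩
  exact ⟨t0, x, _, _, ht0, le_rfl, hsol, hx0, by simp [supply]⟩

include hfin

lemma availableStorage_nonneg {t0 : ℝ} (ht0 : t0 ∈ I) (x0 : Fin n → ℂ) :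
    0 ≤ availableStorage I A B C D t0 x0 :=
  le_csSup (hfin t0 ht0 x0) (zero_mem_supplySet hI hC hD hsolv ht0 x0)

lemma add_le_of_mem_supplySet {t0 : ℝ} (ht0 : t0 ∈ I) {x₁ x₂ : Fin n → ℂ} {a b : ℝ}
    (ha : a ∈ supplySet I A B C D t0 (x₁ + x₂)) (hb : b ∈ supplySet I A B C D t0 (x₁ - x₂)) :
    a + b ≤ 2 * availableStorage I A B C D t0 x₁ + 2 * availableStorage I A B C D t0 x₂ := by
  obtain ⟨ta, xa, ua, ya, hta, h0a, hsola, hxa, rfl⟩ := ha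
  obtain ⟨tb, xb, ub, yb, htb, h0b, hsolb, hxb, rfl⟩ := hb
  have hs : max ta tb ∈ I := max_rec' (· ∈ I) hta htb
  have h0s : t0 ≤ max ta tb := h0a.trans (le_max_left _ _)
  obtain ⟨za, va, wa, hza, hza0, hsupa⟩ := exists_isSIOSol_zero_input_after hI hC hD hsolv hsola
    ht0 hta hs h0a (le_max_left _ _)
  obtain ⟨zb, vb, wb, hzb, hzb0, hsupb⟩ := exists_isSIOSol_zero_input_after hI hC hD hsolv hsolb
    ht0 htb hs h0b (le_max_right _ _)
  have hmem₁ := le_csSup (hfin t0 ht0 x₁) ⟨_, _, _, _, hs, h0s, hza.smul_add_smul 2⁻¹ 2⁻¹ hzb,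
    show (2⁻¹ : ℂ) • za t0 + (2⁻¹ : ℂ) • zb t0 = x₁ by rw [hza0, hxa, hzb0, hxb]; module, rfl⟩
  have hmem₂ := le_csSup (hfin t0 ht0 x₂) ⟨_, _, _, _, hs, h0s, hza.smul_add_smul 2⁻¹ (-2⁻¹) hzb,
    show (2⁻¹ : ℂ) • za t0 + (-2⁻¹ : ℂ) • zb t0 = x₂ by rw [hza0, hxa, hzb0, hxb]; module, rfl⟩
  have hmid := supply_midpoint_add_supply_midpoint hza.1 hza.2.1 hzb.1 hzb.2.1 ht0 hs
  rw [hsupa, hsupb] at hmid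
  unfold availableStorage
  linarith

lemma availableStorage_add_add_sub_le {t0 : ℝ} (ht0 : t0 ∈ I) (x₁ x₂ : Fin n → ℂ) :
    availableStorage I A B C D t0 (x₁ + x₂) + availableStorage I A B C D t0 (x₁ - x₂)
      ≤ 2 * availableStorage I A B C D t0 x₁ + 2 * availableStorage I A B C D t0 x₂ := by
  have hne (x0 : Fin n → ℂ) : (supplySet I A B C D t0 x0).Nonempty :=
    ⟨0, zero_mem_supplySet hI hC hD hsolv ht0 x0⟩
  rw [← le_sub_iff_add_le]
  refine csSup_le (hne _) fun a ha => ?_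
  rw [le_sub_comm]
  refine csSup_le (hne _) fun b hb => ?_
  linarith [add_le_of_mem_supplySet hI hC hD hsolv hfin ht0 ha hb]

lemma availableStorage_parallelogram {t0 : ℝ} (ht0 : t0 ∈ I) (x₁ x₂ : Fin n → ℂ) :
    availableStorage I A B C D t0 (x₁ + x₂) + availableStorage I A B C D t0 (x₁ - x₂)
      = 2 * availableStorage I A B C D t0 x₁ + 2 * availableStorage I A B C D t0 x₂ := by
  have hle := availableStorage_add_add_sub_le hI hC hD hsolv hfin ht0 (x₁ + x₂) (x₁ - x₂)
  rw [show x₁ + x₂ + (x₁ - x₂) = (2 : ℂ) • x₁ by module,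
    show x₁ + x₂ - (x₁ - x₂) = (2 : ℂ) • x₂ by module, availableStorage_smul,
    availableStorage_smul, Complex.norm_two] at hle
  linarith [availableStorage_add_add_sub_le hI hC hD hsolv hfin ht0 x₁ x₂]

end AvailableStorage

theorem statement10_general {n m : ℕ} (I : Set ℝ) (hIconn : I.OrdConnected)
    (A : ℝ → Matrix (Fin n) (Fin n) ℂ) (B : ℝ → Matrix (Fin n) (Fin m) ℂ)
    (C : ℝ → Matrix (Fin m) (Fin n) ℂ) (D : ℝ → Matrix (Fin m) (Fin m) ℂ)
    (hLTV : IsLTV I A B C D)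
    (hexuniq : ∀ t0 ∈ I, ∀ x0 : Fin n → ℂ, ∀ u : ℝ → Fin m → ℂ, VecMemLocLp 2 I u →
        ∃ x x' : ℝ → Fin n → ℂ, VecLocAC I x x' ∧
          (∀ᵐ t ∂volume, t ∈ I → x' t = A t *ᵥ x t + B t *ᵥ u t) ∧ x t0 = x0 ∧
          ∀ z z' : ℝ → Fin n → ℂ, VecLocAC I z z' →
            (∀ᵐ t ∂volume, t ∈ I → z' t = A t *ᵥ z t + B t *ᵥ u t) → z t0 = x0 →
            ∀ t ∈ I, z t = x t)
    (hfin : ∀ t0 ∈ I, ∀ x0 : Fin n → ℂ, BddAbove (supplySet I A B C D t0 x0)) :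
    ∃ Q : ℝ → Matrix (Fin n) (Fin n) ℂ, (∀ t ∈ I, (Q t).PosSemidef) ∧
      ∀ t0 ∈ I, ∀ x0 : Fin n → ℂ,
        sSup (supplySet I A B C D t0 x0) = quadStorage Q t0 x0 := by
  obtain ⟨-, -, hC, hD⟩ := hLTV
  have hsolv : StateEquationSolvable I A B := fun t0 ht0 x0 u hu =>
    let ⟨x, x', hx, hx', hx0, _⟩ := hexuniq t0 ht0 x0 u hu
    ⟨x, x', hx, hx', hx0⟩
  have hpar {t : ℝ} (ht : t ∈ I) :=
    availableStorage_parallelogram hIconn hC hD hsolv hfin ht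
  have hnonneg {t : ℝ} (ht : t ∈ I) :=
    availableStorage_nonneg hIconn hC hD hsolv hfin ht
  refine ⟨fun t => (2 : ℂ) • polarMatrix (availableStorage I A B C D t),
    fun t ht => (polarMatrix_posSemidef (availableStorage_smul t) (hpar ht) (hnonneg ht)).smul
      zero_le_two, fun t0 ht0 x0 => ?_⟩
  rw [quadStorage, smul_mulVec, dotProduct_smul,
    star_dotProduct_polarMatrix_mulVec (availableStorage_smul t0) (hpar ht0) (hnonneg ht0)]
  simp [availableStorage]

/-- if the available storage is finite, it is a quadratic form
`V_a(t0, x0) = ½ x0^* Q(t0) x0` for some pointwise Hermitian PSD `Q`. -/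
theorem statement10 {n m : ℕ} (I : Set ℝ) (hIopen : IsOpen I) (hIconn : I.OrdConnected)
    (A : ℝ → Matrix (Fin n) (Fin n) ℂ) (B : ℝ → Matrix (Fin n) (Fin m) ℂ)
    (C : ℝ → Matrix (Fin m) (Fin n) ℂ) (D : ℝ → Matrix (Fin m) (Fin m) ℂ)
    (hLTV : IsLTV I A B C D)
    (hexuniq : ∀ t0 ∈ I, ∀ x0 : Fin n → ℂ, ∀ u : ℝ → Fin m → ℂ, VecMemLocLp 2 I u →
        ∃ x x' : ℝ → Fin n → ℂ, VecLocAC I x x' ∧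
          (∀ᵐ t ∂volume, t ∈ I → x' t = A t *ᵥ x t + B t *ᵥ u t) ∧ x t0 = x0 ∧
          ∀ z z' : ℝ → Fin n → ℂ, VecLocAC I z z' →
            (∀ᵐ t ∂volume, t ∈ I → z' t = A t *ᵥ z t + B t *ᵥ u t) → z t0 = x0 →
            ∀ t ∈ I, z t = x t)
    (hfin : ∀ t0 ∈ I, ∀ x0 : Fin n → ℂ, BddAbove (supplySet I A B C D t0 x0)) :
    ∃ Q : ℝ → Matrix (Fin n) (Fin n) ℂ, (∀ t ∈ I, (Q t).PosSemidef) ∧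
      ∀ t0 ∈ I, ∀ x0 : Fin n → ℂ,
        sSup (supplySet I A B C D t0 x0) = quadStorage Q t0 x0 :=
  statement10_general I hIconn A B C D hLTV hexuniq hfin

end Paper
end
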